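/- Let Γ be a consistent extension of Δ⁰₁-comprehension that proves the existence of a universal Σ⁰₁ formula. Let P and Q be Π¹₂-problems and Λ(X,n,e) an arithmetic formula such that Player 2 wins any run of Ĝ^Γ(Q → P) that it plays according to Λ in at most n many moves. Then Player 2 wins any run of G^Γ(Q → P) that it plays according to Λ in at most n many moves. -/

import Mathlib

/-!
A deep embedding of second-order arithmetic (with Henkin/two-sorted first-order semantics),
Π¹₂-problems, and the reduction games of Hirschfeldt–Jockusch type.

Provability `Proves Γ φ` is rendered as semantic consequence over all (Henkin) models;
by the Gödel completeness theorem for (two-sorted) first-order logic this coincides with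
derivability from `Γ`.
-/

namespace SOA

/-- An `L₁`-structure (a structure in the language of first-order arithmetic). -/
structure L1Struc where
  carrier : Type
  zero : carrier
  one : carrier
  add : carrier → carrier → carrier
  mul : carrier → carrier → carrier
  lt : carrier → carrier → Prop

/-- The standard natural numbers as an `L₁`-structure. -/
abbrev stdM : L1Struc where
  carrier := ℕ
  zero := 0
  one := 1
  add := (· + ·)
  mul := (· * ·)
  lt := (· < ·)

/-- Number terms of `L₁`/`L₂`, with named variables. -/
inductive Term : Type where
  | var : ℕ → Term
  | zero : Term
  | one : Term
  | add : Term → Term → Term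
  | mul : Term → Term → Term

def Term.val (M : L1Struc) (v : ℕ → M.carrier) : Term → M.carrier
  | .var i => v i
  | .zero => M.zero
  | .one => M.one
  | .add t s => M.add (t.val M v) (s.val M v)
  | .mul t s => M.mul (t.val M v) (s.val M v)

def Term.fv : Term → Set ℕ
  | .var i => {i}
  | .zero => ∅
  | .one => ∅
  | .add t s => t.fv ∪ s.fv
  | .mul t s => t.fv ∪ s.fv

/-- Formulas of `L₂`; number variables and set variables are indexed by `ℕ`. -/
inductive Formula : Type where
  | eq : Term → Term → Formula
  | lt : Term → Term → Formula
  | mem : Term → ℕ → Formula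
  | not : Formula → Formula
  | and : Formula → Formula → Formula
  | or : Formula → Formula → Formula
  | imp : Formula → Formula → Formula
  | allN : ℕ → Formula → Formula
  | exN : ℕ → Formula → Formula
  | allS : ℕ → Formula → Formula
  | exS : ℕ → Formula → Formula

def Formula.iff (φ ψ : Formula) : Formula := (φ.imp ψ).and (ψ.imp φ)

/-- Tarskian satisfaction; set quantifiers range over the second-order domain `D`. -/
def Formula.Sat (M : L1Struc) (D : Set (Set M.carrier)) :
    (ℕ → M.carrier) → (ℕ → Set M.carrier) → Formula → Prop
  | v, _, .eq t s => t.val M v = s.val M v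
  | v, _, .lt t s => M.lt (t.val M v) (s.val M v)
  | v, V, .mem t X => t.val M v ∈ V X
  | v, V, .not φ => ¬ Formula.Sat M D v V φ
  | v, V, .and φ ψ => Formula.Sat M D v V φ ∧ Formula.Sat M D v V ψ
  | v, V, .or φ ψ => Formula.Sat M D v V φ ∨ Formula.Sat M D v V ψ
  | v, V, .imp φ ψ => Formula.Sat M D v V φ → Formula.Sat M D v V ψ
  | v, V, .allN x φ => ∀ a : M.carrier, Formula.Sat M D (Function.update v x a) V φ
  | v, V, .exN x φ => ∃ a : M.carrier, Formula.Sat M D (Function.update v x a) V φ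
  | v, V, .allS X φ => ∀ A ∈ D, Formula.Sat M D v (Function.update V X A) φ
  | v, V, .exS X φ => ∃ A ∈ D, Formula.Sat M D v (Function.update V X A) φ

/-- Free number variables. -/
def Formula.numFV : Formula → Set ℕ
  | .eq t s => t.fv ∪ s.fv
  | .lt t s => t.fv ∪ s.fv
  | .mem t _ => t.fv
  | .not φ => φ.numFV
  | .and φ ψ => φ.numFV ∪ ψ.numFV
  | .or φ ψ => φ.numFV ∪ ψ.numFV
  | .imp φ ψ => φ.numFV ∪ ψ.numFV
  | .allN x φ => φ.numFV \ {x}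
  | .exN x φ => φ.numFV \ {x}
  | .allS _ φ => φ.numFV
  | .exS _ φ => φ.numFV

/-- Free set variables. -/
def Formula.setFV : Formula → Set ℕ
  | .eq _ _ => ∅
  | .lt _ _ => ∅
  | .mem _ X => {X}
  | .not φ => φ.setFV
  | .and φ ψ => φ.setFV ∪ ψ.setFV
  | .or φ ψ => φ.setFV ∪ ψ.setFV
  | .imp φ ψ => φ.setFV ∪ ψ.setFV
  | .allN _ φ => φ.setFV
  | .exN _ φ => φ.setFV
  | .allS X φ => φ.setFV \ {X}
  | .exS X φ => φ.setFV \ {X}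

/-- Arithmetic formulas: no set quantifiers (set variables may occur free). -/
def Formula.IsArithmetic : Formula → Prop
  | .eq _ _ => True
  | .lt _ _ => True
  | .mem _ _ => True
  | .not φ => φ.IsArithmetic
  | .and φ ψ => φ.IsArithmetic ∧ ψ.IsArithmetic
  | .or φ ψ => φ.IsArithmetic ∧ ψ.IsArithmetic
  | .imp φ ψ => φ.IsArithmetic ∧ ψ.IsArithmetic
  | .allN _ φ => φ.IsArithmetic
  | .exN _ φ => φ.IsArithmetic
  | .allS _ _ => False
  | .exS _ _ => False

/-- Δ⁰₀ (bounded) formulas. -/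
inductive IsDelta0 : Formula → Prop
  | eq (t s : Term) : IsDelta0 (.eq t s)
  | lt (t s : Term) : IsDelta0 (.lt t s)
  | mem (t : Term) (X : ℕ) : IsDelta0 (.mem t X)
  | not {φ} : IsDelta0 φ → IsDelta0 (.not φ)
  | and {φ ψ} : IsDelta0 φ → IsDelta0 ψ → IsDelta0 (.and φ ψ)
  | or {φ ψ} : IsDelta0 φ → IsDelta0 ψ → IsDelta0 (.or φ ψ)
  | imp {φ ψ} : IsDelta0 φ → IsDelta0 ψ → IsDelta0 (.imp φ ψ)
  | ballLt {φ} (x : ℕ) (t : Term) : x ∉ t.fv → IsDelta0 φ →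
      IsDelta0 (.allN x (.imp (.lt (.var x) t) φ))
  | bexLt {φ} (x : ℕ) (t : Term) : x ∉ t.fv → IsDelta0 φ →
      IsDelta0 (.exN x (.and (.lt (.var x) t) φ))

/-- Σ⁰₁ formulas: existential number quantifiers over a Δ⁰₀ matrix. -/
inductive IsSigma01 : Formula → Prop
  | delta0 {φ} : IsDelta0 φ → IsSigma01 φ
  | exN {φ} (x : ℕ) : IsSigma01 φ → IsSigma01 (.exN x φ)

/-- Π⁰₁ formulas. -/
inductive IsPi01 : Formula → Prop
  | delta0 {φ} : IsDelta0 φ → IsPi01 φ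
  | allN {φ} (x : ℕ) : IsPi01 φ → IsPi01 (.allN x φ)

/-- Σ⁰₂ formulas. -/
inductive IsSigma02 : Formula → Prop
  | pi01 {φ} : IsPi01 φ → IsSigma02 φ
  | exN {φ} (x : ℕ) : IsSigma02 φ → IsSigma02 (.exN x φ)

/-- Π¹₁ formulas: universal set quantifiers over an arithmetic matrix. -/
inductive IsPi11 : Formula → Prop
  | arith {φ} : φ.IsArithmetic → IsPi11 φ
  | allS {φ} (X : ℕ) : IsPi11 φ → IsPi11 (.allS X φ)

/-- Quantifier-free `L₁`-formulas (no set variables, no quantifiers). -/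
inductive IsQFL1 : Formula → Prop
  | eq (t s : Term) : IsQFL1 (.eq t s)
  | lt (t s : Term) : IsQFL1 (.lt t s)
  | not {φ} : IsQFL1 φ → IsQFL1 (.not φ)
  | and {φ ψ} : IsQFL1 φ → IsQFL1 ψ → IsQFL1 (.and φ ψ)
  | or {φ ψ} : IsQFL1 φ → IsQFL1 ψ → IsQFL1 (.or φ ψ)
  | imp {φ ψ} : IsQFL1 φ → IsQFL1 ψ → IsQFL1 (.imp φ ψ)

/-- Existential `L₁`-formulas. -/
inductive IsExistentialL1 : Formula → Prop
  | qf {φ} : IsQFL1 φ → IsExistentialL1 φ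
  | exN {φ} (x : ℕ) : IsExistentialL1 φ → IsExistentialL1 (.exN x φ)

def Term.subst (x : ℕ) (t : Term) : Term → Term
  | .var i => if i = x then t else .var i
  | .zero => .zero
  | .one => .one
  | .add a b => .add (Term.subst x t a) (Term.subst x t b)
  | .mul a b => .mul (Term.subst x t a) (Term.subst x t b)

/-- Substitution of the term `t` for the number variable `x` (used only with terms all of
whose variables are `x` itself, where it is capture-free). -/
def Formula.substN (x : ℕ) (t : Term) : Formula → Formula
  | .eq a b => .eq (Term.subst x t a) (Term.subst x t b)
  | .lt a b => .lt (Term.subst x t a) (Term.subst x t b)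
  | .mem a X => .mem (Term.subst x t a) X
  | .not φ => .not (φ.substN x t)
  | .and φ ψ => .and (φ.substN x t) (ψ.substN x t)
  | .or φ ψ => .or (φ.substN x t) (ψ.substN x t)
  | .imp φ ψ => .imp (φ.substN x t) (ψ.substN x t)
  | .allN y φ => if y = x then .allN y φ else .allN y (φ.substN x t)
  | .exN y φ => if y = x then .exN y φ else .exN y (φ.substN x t)
  | .allS X φ => .allS X (φ.substN x t)
  | .exS X φ => .exS X (φ.substN x t)

/-- `(M,S)` is a model of the theory `Γ` (schemes are read with free variables as
universally quantified parameters). -/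
def Models2 (M : L1Struc) (S : Set (Set M.carrier)) (Γ : Set Formula) : Prop :=
  ∀ φ ∈ Γ, ∀ (v : ℕ → M.carrier) (V : ℕ → Set M.carrier), (∀ i, V i ∈ S) → φ.Sat M S v V

/-- `Γ ⊢ φ`, rendered as semantic consequence over all Henkin models (equivalently,
derivability, by the Gödel completeness theorem). -/
def Proves (Γ : Set Formula) (φ : Formula) : Prop :=
  ∀ (M : L1Struc) (S : Set (Set M.carrier)), Models2 M S Γ →
    ∀ (v : ℕ → M.carrier) (V : ℕ → Set M.carrier), (∀ i, V i ∈ S) → φ.Sat M S v V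

/-- `Γ` is consistent (has a model). -/
def SemConsistent (Γ : Set Formula) : Prop :=
  ∃ (M : L1Struc) (S : Set (Set M.carrier)), Models2 M S Γ

/-- The Δ⁰₁-comprehension scheme. -/
def Delta01CA : Set Formula :=
  { F | ∃ (φ₀ φ₁ : Formula) (x X : ℕ), IsSigma01 φ₀ ∧ IsSigma01 φ₁ ∧
      X ∉ φ₀.setFV ∧ X ∉ φ₁.setFV ∧
      F = .imp (.allN x (Formula.iff φ₀ (.not φ₁)))
            (.exS X (.allN x (Formula.iff (.mem (.var x) X) φ₀))) }

/-- The Σ⁰₁-induction scheme. -/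
def ISigma01 : Set Formula :=
  { F | ∃ (φ : Formula) (x : ℕ), IsSigma01 φ ∧
      F = .imp (.and (φ.substN x .zero) (.allN x (.imp φ (φ.substN x (.add (.var x) .one)))))
            (.allN x φ) }

def ax1 : Formula := .not (.eq (.add (.var 0) .one) .zero)
def ax2 : Formula := .imp (.eq (.add (.var 0) .one) (.add (.var 1) .one)) (.eq (.var 0) (.var 1))
def ax3 : Formula := .eq (.add (.var 0) .zero) (.var 0)
def ax4 : Formula := .eq (.add (.var 0) (.add (.var 1) .one)) (.add (.add (.var 0) (.var 1)) .one)
def ax5 : Formula := .eq (.mul (.var 0) .zero) .zero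
def ax6 : Formula := .eq (.mul (.var 0) (.add (.var 1) .one)) (.add (.mul (.var 0) (.var 1)) (.var 0))
def ax7 : Formula := .not (.lt (.var 0) .zero)
def ax8 : Formula :=
  Formula.iff (.lt (.var 0) (.add (.var 1) .one)) (.or (.lt (.var 0) (.var 1)) (.eq (.var 0) (.var 1)))

/-- The basic (PA⁻) axioms of `RCA₀`. -/
def BasicAx : Set Formula := {ax1, ax2, ax3, ax4, ax5, ax6, ax7, ax8}

/-- The theory `RCA₀`. -/
def RCA0 : Set Formula := BasicAx ∪ ISigma01 ∪ Delta01CA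

/-- The Σ⁰₂-bounding scheme `BΣ⁰₂`. -/
def BSigma02 : Set Formula :=
  { F | ∃ (φ : Formula) (n i k b : ℕ), IsSigma02 φ ∧
      n ∉ φ.numFV ∧ b ∉ φ.numFV ∧
      n ≠ i ∧ n ≠ k ∧ n ≠ b ∧ i ≠ k ∧ i ≠ b ∧ k ≠ b ∧
      F = .allN n (.imp (.allN i (.imp (.lt (.var i) (.var n)) (.exN k φ)))
            (.exN b (.allN i (.imp (.lt (.var i) (.var n))
              (.exN k (.and (.or (.lt (.var k) (.var b)) (.eq (.var k) (.var b))) φ)))))) }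

/-- The Π¹₁ sentences true in the standard model `(ℕ, 𝒫(ℕ))`. -/
def TruePi11 : Set Formula :=
  { φ | IsPi11 φ ∧ φ.numFV = ∅ ∧ φ.setFV = ∅ ∧
        φ.Sat stdM Set.univ (fun _ => stdM.zero) (fun _ => (∅ : Set stdM.carrier)) }

/-- `Γ` is an extension of Δ⁰₁-comprehension by Π¹₁ formulas. -/
def ExtByPi11 (Γ : Set Formula) : Prop :=
  Delta01CA ⊆ Γ ∧ ∀ φ ∈ Γ, φ ∈ Delta01CA ∨ IsPi11 φ

/-! ### Π¹₂-problems -/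

/-- A Π¹₂-problem, given by arithmetic formulas `Θ(X)` (set variable `0`) and
`Ψ(X,Y)` (set variables `0`, `1`). -/
structure Pi12Problem where
  theta : Formula
  psi : Formula

def Pi12Problem.WellFormed (P : Pi12Problem) : Prop :=
  P.theta.IsArithmetic ∧ P.psi.IsArithmetic ∧
  P.theta.numFV = ∅ ∧ P.psi.numFV = ∅ ∧
  P.theta.setFV ⊆ {0} ∧ P.psi.setFV ⊆ {0, 1}

/-- `X` is an `M`-instance of `P`. -/
def Pi12Problem.Inst (P : Pi12Problem) (M : L1Struc) (X : Set M.carrier) : Prop :=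
  P.theta.Sat M Set.univ (fun _ => M.zero) (fun _ => X)

/-- `Y` is a solution to the `M`-instance `X` of `P`. -/
def Pi12Problem.Sol (P : Pi12Problem) (M : L1Struc) (X Y : Set M.carrier) : Prop :=
  P.psi.Sat M Set.univ (fun _ => M.zero) (fun i => if i = 0 then X else Y)

/-- The sentence `∀X (Θ(X) → ∃Y Ψ(X,Y))`. -/
def Pi12Problem.toSentence (P : Pi12Problem) : Formula :=
  .allS 0 (.imp P.theta (.exS 1 P.psi))

/-! ### Δ⁰₁-definability, `M[X₀,…,Xₙ]`, consistency with a theory -/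

/-- `X` is Δ⁰₁-definable over `M` with number parameters and set parameters from `Ps`. -/
def Delta1Def (M : L1Struc) (Ps : Set (Set M.carrier)) (X : Set M.carrier) : Prop :=
  ∃ (φ₀ φ₁ : Formula) (x : ℕ) (v : ℕ → M.carrier) (V : ℕ → Set M.carrier),
    IsSigma01 φ₀ ∧ IsSigma01 φ₁ ∧
    (∀ i ∈ φ₀.setFV ∪ φ₁.setFV, V i ∈ Ps) ∧
    (∀ a, φ₀.Sat M Set.univ (Function.update v x a) V ↔
          ¬ φ₁.Sat M Set.univ (Function.update v x a) V) ∧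
    X = {a | φ₀.Sat M Set.univ (Function.update v x a) V}

/-- The second-order part of `M[X₀,…,Xₙ]` for `Ps = {X₀,…,Xₙ}`. -/
def Mcl (M : L1Struc) (Ps : Set (Set M.carrier)) : Set (Set M.carrier) :=
  { X | Delta1Def M Ps X }

def histL (M : L1Struc) (f : ℕ → Set M.carrier) (n : ℕ) : List (Set M.carrier) :=
  (List.range (n+1)).map f

/-- The structure `M[X₀,…,Xₙ]` determined by a history of Player 1 moves. -/
def Board (M : L1Struc) (hist : List (Set M.carrier)) : Set (Set M.carrier) :=
  Mcl M { X | X ∈ hist }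

/-- An `L₂`-structure `(M,S)` is consistent with `Γ`: it is contained in a model of `Γ`
with the same first-order part. -/
def ConsWith (M : L1Struc) (S : Set (Set M.carrier)) (Γ : Set Formula) : Prop :=
  ∃ T, S ⊆ T ∧ Models2 M T Γ

/-- `S` is closed under Δ⁰₁-comprehension (with parameters from `S`). -/
def D01Closed (M : L1Struc) (S : Set (Set M.carrier)) : Prop :=
  ∀ X, Delta1Def M S X → X ∈ S

/-- The join `X ⊕ Y` inside `M`. -/
def joinM (M : L1Struc) (X Y : Set M.carrier) : Set M.carrier :=
  { c | (∃ a ∈ X, c = M.add a a) ∨ (∃ a ∈ Y, c = M.add (M.add a a) M.one) }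

/-- `X₀ ⊕ X₁ ⊕ ⋯ ⊕ Xₙ` (associated to the left). -/
def joinList (M : L1Struc) : List (Set M.carrier) → Set M.carrier
  | [] => ∅
  | X :: rest => rest.foldl (joinM M) X

/-- Numerals in `M`. -/
def numM (M : L1Struc) : ℕ → M.carrier
  | 0 => M.zero
  | n+1 => M.add (numM M n) M.one

/-! ### Reduction games

A run is given by Player 1's moves `f 0, f 1, …` and Player 2's moves `g 0, g 1, …`,
where `g n` is Player 2's reply (a victory flag together with a set) to `f 0, …, f n`.
`C` is the side condition on Player 1's histories (consistency with `Γ` for `G^Γ`,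
membership in `S` for the modified game `Ĝ^Γ`, trivial for the game over `ω`). -/

/-- The run is still alive after Player 1's move at stage `n` (all moves so far legal,
Player 2 has not yet declared victory). -/
def Alive (P Q : Pi12Problem) (M : L1Struc) (C : List (Set M.carrier) → Prop)
    (f : ℕ → Set M.carrier) (g : ℕ → Prop × Set M.carrier) : ℕ → Prop
  | 0 => P.Inst M (f 0) ∧ C (histL M f 0)
  | n+1 => Alive P Q M C f g n ∧ ¬ (g n).1 ∧ (g n).2 ∈ Board M (histL M f n) ∧
      Q.Inst M ((g n).2) ∧ Q.Sol M ((g n).2) (f (n+1)) ∧ C (histL M f (n+1))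

/-- Player 2's move at stage `n` is a legal winning move. -/
def P2WinMove (P : Pi12Problem) (M : L1Struc) (f : ℕ → Set M.carrier)
    (g : ℕ → Prop × Set M.carrier) (n : ℕ) : Prop :=
  (g n).1 ∧ (g n).2 ∈ Board M (histL M f n) ∧ P.Sol M (f 0) ((g n).2)

/-- Player 2's move at stage `n` is a legal continuing move (an instance of `Q`). -/
def P2ContMove (Q : Pi12Problem) (M : L1Struc) (f : ℕ → Set M.carrier)
    (g : ℕ → Prop × Set M.carrier) (n : ℕ) : Prop :=
  ¬ (g n).1 ∧ (g n).2 ∈ Board M (histL M f n) ∧ Q.Inst M ((g n).2)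

/-- Player 2 wins the run `(f,g)`: its moves are always legal while the run is alive, and
the run does not go on forever. -/
def P2WinsRun (P Q : Pi12Problem) (M : L1Struc) (C : List (Set M.carrier) → Prop)
    (f : ℕ → Set M.carrier) (g : ℕ → Prop × Set M.carrier) : Prop :=
  (∀ n, Alive P Q M C f g n → (P2ContMove Q M f g n ∨ P2WinMove P M f g n)) ∧
  ¬ (∀ n, Alive P Q M C f g n)

/-- Player 2 wins the run `(f,g)` within at most `n₀` moves. -/
def P2WinsRunWithin (P Q : Pi12Problem) (M : L1Struc) (C : List (Set M.carrier) → Prop)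
    (f : ℕ → Set M.carrier) (g : ℕ → Prop × Set M.carrier) (n₀ : ℕ) : Prop :=
  (∀ n, Alive P Q M C f g n → (P2ContMove Q M f g n ∨ P2WinMove P M f g n)) ∧
  ¬ Alive P Q M C f g n₀

/-- Side condition for `G^Γ`: each `M[X₀,…,Xₙ]` must be consistent with `Γ`. -/
def CondG (Γ : Set Formula) (M : L1Struc) (hist : List (Set M.carrier)) : Prop :=
  ConsWith M (Board M hist) Γ

/-- Side condition for `Ĝ^Γ`: Player 1's moves must lie in `S`. -/
def CondS (M : L1Struc) (S : Set (Set M.carrier)) (hist : List (Set M.carrier)) : Prop :=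
  ∀ X ∈ hist, X ∈ S

/-- Player 2 has a winning strategy for `G^Γ(Q → P)`. -/
def P2HasWinG (Γ : Set Formula) (P Q : Pi12Problem) : Prop :=
  ∃ σ : (M : L1Struc) → List (Set M.carrier) → Prop × Set M.carrier,
    ∀ M : L1Struc, Countable M.carrier → ∀ f,
      P2WinsRun P Q M (CondG Γ M) f (fun n => σ M (histL M f n))

/-- Player 2 has a winning strategy for `G^Γ(Q → P)` ensuring victory within `n₀` moves. -/
def P2HasWinGWithin (Γ : Set Formula) (P Q : Pi12Problem) (n₀ : ℕ) : Prop :=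
  ∃ σ : (M : L1Struc) → List (Set M.carrier) → Prop × Set M.carrier,
    ∀ M : L1Struc, Countable M.carrier → ∀ f,
      P2WinsRunWithin P Q M (CondG Γ M) f (fun n => σ M (histL M f n)) n₀

/-- Player 2 has a winning strategy for the modified game `Ĝ^Γ(Q → P)`. -/
def P2HasWinHat (Γ : Set Formula) (P Q : Pi12Problem) : Prop :=
  ∃ σ : (M : L1Struc) → Set (Set M.carrier) → List (Set M.carrier) → Prop × Set M.carrier,
    ∀ (M : L1Struc) (S : Set (Set M.carrier)), Countable M.carrier →
      Models2 M S Γ → D01Closed M S → ∀ f,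
        P2WinsRun P Q M (CondS M S) f (fun n => σ M S (histL M f n))

/-- Player 2 has a winning strategy for `Ĝ^Γ(Q → P)` ensuring victory within `n₀` moves. -/
def P2HasWinHatWithin (Γ : Set Formula) (P Q : Pi12Problem) (n₀ : ℕ) : Prop :=
  ∃ σ : (M : L1Struc) → Set (Set M.carrier) → List (Set M.carrier) → Prop × Set M.carrier,
    ∀ (M : L1Struc) (S : Set (Set M.carrier)), Countable M.carrier →
      Models2 M S Γ → D01Closed M S → ∀ f,
        P2WinsRunWithin P Q M (CondS M S) f (fun n => σ M S (histL M f n)) n₀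

/-- A strategy for Player 1 in `G^Γ`. -/
structure P1StratG where
  M : L1Struc
  first : Set M.carrier
  next : List (Prop × Set M.carrier) → Set M.carrier

def P1StratG.play (τ : P1StratG) (g : ℕ → Prop × Set τ.M.carrier) : ℕ → Set τ.M.carrier
  | 0 => τ.first
  | n+1 => τ.next ((List.range (n+1)).map g)

/-- Player 1 wins the run `(f,g)`: the first move is legal, Player 2 never makes a legal
winning move, and Player 1 can always respond legally. -/
def P1WinsRun (P Q : Pi12Problem) (M : L1Struc) (C : List (Set M.carrier) → Prop)
    (f : ℕ → Set M.carrier) (g : ℕ → Prop × Set M.carrier) : Prop :=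
  Alive P Q M C f g 0 ∧
  ∀ n, Alive P Q M C f g n →
    (¬ P2WinMove P M f g n ∧ (P2ContMove Q M f g n → Alive P Q M C f g (n+1)))

/-- Player 1 has a winning strategy for `G^Γ(Q → P)`. -/
def P1HasWinG (Γ : Set Formula) (P Q : Pi12Problem) : Prop :=
  ∃ τ : P1StratG, Countable τ.M.carrier ∧
    ∀ g, P1WinsRun P Q τ.M (CondG Γ τ.M) (τ.play g) g

/-- A strategy for Player 1 in the modified game `Ĝ^Γ` (its first move includes a model `(M,S)`). -/
structure P1StratHat where
  M : L1Struc
  S : Set (Set M.carrier)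
  first : Set M.carrier
  next : List (Prop × Set M.carrier) → Set M.carrier

def P1StratHat.play (τ : P1StratHat) (g : ℕ → Prop × Set τ.M.carrier) : ℕ → Set τ.M.carrier
  | 0 => τ.first
  | n+1 => τ.next ((List.range (n+1)).map g)

/-- Player 1 has a winning strategy for `Ĝ^Γ(Q → P)`. -/
def P1HasWinHat (Γ : Set Formula) (P Q : Pi12Problem) : Prop :=
  ∃ τ : P1StratHat, Countable τ.M.carrier ∧ Models2 τ.M τ.S Γ ∧ D01Closed τ.M τ.S ∧
    ∀ g, P1WinsRun P Q τ.M (CondS τ.M τ.S) (τ.play g) g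

/-! ### Universal Σ⁰₁ formulas and the functionals `Φₑ` -/

/-- Cantor pairing, as a relation in `M`: `e = ⟨i,j⟩` iff `2e = (i+j)² + (i+j) + 2i`. -/
def cantorPairRel (M : L1Struc) (i j e : M.carrier) : Prop :=
  M.add e e = M.add (M.add (M.mul (M.add i j) (M.add i j)) (M.add i j)) (M.add i i)

/-- Satisfaction of `θ(i, n, X)` (number variables `0`, `1`; set variable `0`). -/
def satIdx (θ : Formula) (M : L1Struc) (i n : M.carrier) (X : Set M.carrier) : Prop :=
  θ.Sat M Set.univ (fun m => if m = 0 then i else if m = 1 then n else M.zero) (fun _ => X)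

/-- `Y = Φₑ^X` in `M`, relative to the universal Σ⁰₁ formula `θ`. -/
def IsPhi (θ : Formula) (M : L1Struc) (e : M.carrier) (X Y : Set M.carrier) : Prop :=
  ∃ i j : M.carrier, cantorPairRel M i j e ∧
    (∀ n, satIdx θ M i n X ↔ ¬ satIdx θ M j n X) ∧
    (∀ n, n ∈ Y ↔ satIdx θ M i n X)

def GoodSigma (φ : Formula) : Prop :=
  IsSigma01 φ ∧ φ.numFV ⊆ {0, 1} ∧ φ.setFV ⊆ {0}

/-- `θ` is a universal Σ⁰₁ formula, provably in `Γ`. -/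
def UnivSigma01 (Γ : Set Formula) (θ : Formula) : Prop :=
  GoodSigma θ ∧ ∀ φ, GoodSigma φ →
    ∀ (M : L1Struc) (S : Set (Set M.carrier)), Models2 M S Γ →
      ∀ e : M.carrier, ∃ i : M.carrier, ∀ n : M.carrier, ∀ X ∈ S,
        (satIdx θ M i n X ↔ satIdx φ M e n X)

/-- `θ` is a universal Σ⁰₁ formula over the standard model. -/
def UnivSigma01Std (θ : Formula) : Prop :=
  GoodSigma θ ∧ ∀ φ, GoodSigma φ →
    ∀ e : stdM.carrier, ∃ i : stdM.carrier, ∀ (n : stdM.carrier) (X : Set stdM.carrier),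
      (satIdx θ stdM i n X ↔ satIdx φ stdM e n X)

/-! ### Computable strategies for Player 2 -/

/-- The move prescribed by the computable strategy with index `k` at the given history:
Player 2 plays `Z = Φ_e^{X₀⊕⋯⊕Xₙ}` where `e = Φ_k(n)`; by the coding convention, `Z`
declares victory iff `0 ∈ Z`, with payload `{a : a+1 ∈ Z}`. -/
def CodeMove (θ : Formula) (M : L1Struc) (k : Nat.Partrec.Code)
    (hist : List (Set M.carrier)) (mv : Prop × Set M.carrier) : Prop :=
  ∃ e : ℕ, e ∈ k.eval (hist.length - 1) ∧
    ∃ Z : Set M.carrier, IsPhi θ M (numM M e) (joinList M hist) Z ∧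
      mv = ((M.zero ∈ Z), { a | M.add a M.one ∈ Z })

/-- The computable strategy `k` wins every run of the game over `M` with side condition `C`. -/
def P2CompWinsC (θ : Formula) (k : Nat.Partrec.Code) (P Q : Pi12Problem) (M : L1Struc)
    (C : List (Set M.carrier) → Prop) : Prop :=
  ∀ f g,
    ((∀ n, (∀ m < n, Alive P Q M C f g m → CodeMove θ M k (histL M f m) (g m)) →
        Alive P Q M C f g n → ∃ mv, CodeMove θ M k (histL M f n) mv) ∧
     ((∀ n, Alive P Q M C f g n → CodeMove θ M k (histL M f n) (g n)) →
        P2WinsRun P Q M C f g))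

def P2CompWinsCWithin (θ : Formula) (k : Nat.Partrec.Code) (P Q : Pi12Problem) (M : L1Struc)
    (C : List (Set M.carrier) → Prop) (n₀ : ℕ) : Prop :=
  ∀ f g,
    ((∀ n, (∀ m < n, Alive P Q M C f g m → CodeMove θ M k (histL M f m) (g m)) →
        Alive P Q M C f g n → ∃ mv, CodeMove θ M k (histL M f n) mv) ∧
     ((∀ n, Alive P Q M C f g n → CodeMove θ M k (histL M f n) (g n)) →
        P2WinsRunWithin P Q M C f g n₀))

/-- Player 2 has a computable winning strategy for `G^Γ(Q → P)`. -/
def P2CompWinsG (Γ : Set Formula) (θ : Formula) (P Q : Pi12Problem) : Prop :=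
  ∃ k : Nat.Partrec.Code, ∀ M : L1Struc, Countable M.carrier →
    P2CompWinsC θ k P Q M (CondG Γ M)

def P2CompWinsGWithin (Γ : Set Formula) (θ : Formula) (P Q : Pi12Problem) (n₀ : ℕ) : Prop :=
  ∃ k : Nat.Partrec.Code, ∀ M : L1Struc, Countable M.carrier →
    P2CompWinsCWithin θ k P Q M (CondG Γ M) n₀

/-- Player 2 has a computable winning strategy for `Ĝ^Γ(Q → P)`. -/
def P2CompWinsHat (Γ : Set Formula) (θ : Formula) (P Q : Pi12Problem) : Prop :=
  ∃ k : Nat.Partrec.Code, ∀ (M : L1Struc) (S : Set (Set M.carrier)), Countable M.carrier →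
    Models2 M S Γ → D01Closed M S → P2CompWinsC θ k P Q M (CondS M S)

def P2CompWinsHatWithin (Γ : Set Formula) (θ : Formula) (P Q : Pi12Problem) (n₀ : ℕ) : Prop :=
  ∃ k : Nat.Partrec.Code, ∀ (M : L1Struc) (S : Set (Set M.carrier)), Countable M.carrier →
    Models2 M S Γ → D01Closed M S → P2CompWinsCWithin θ k P Q M (CondS M S) n₀

/-- Player 2 has a computable winning strategy for the game `G(Q → P)` over the standard
natural numbers. -/
def P2CompWinsStd (θ : Formula) (P Q : Pi12Problem) : Prop :=
  ∃ k : Nat.Partrec.Code, P2CompWinsC θ k P Q stdM (fun _ => True)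

def P2CompWinsStdWithin (θ : Formula) (P Q : Pi12Problem) (n₀ : ℕ) : Prop :=
  ∃ k : Nat.Partrec.Code, P2CompWinsCWithin θ k P Q stdM (fun _ => True) n₀

/-- Player 2 has a winning strategy for the game `G(Q → P)` over the standard natural
numbers ensuring victory within `n₀` moves. -/
def P2HasWinStdWithin (P Q : Pi12Problem) (n₀ : ℕ) : Prop :=
  ∃ σ : List (Set stdM.carrier) → Prop × Set stdM.carrier,
    ∀ f, P2WinsRunWithin P Q stdM (fun _ => True) f (fun n => σ (histL stdM f n)) n₀

/-- `P ≤ω^n Q`: Player 2 wins `G(Q → P)` over `ω` in at most `n+1` moves. -/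
def leOmegaN (P Q : Pi12Problem) (n : ℕ) : Prop := P2HasWinStdWithin P Q (n+1)

/-- Weihrauch reducibility over `Γ` (relative to the universal Σ⁰₁ formula `θ`). -/
def WRed (Γ : Set Formula) (θ : Formula) (P Q : Pi12Problem) : Prop :=
  ∃ e i : ℕ, ∀ (M : L1Struc) (S : Set (Set M.carrier)),
    Countable M.carrier → Models2 M S Γ → D01Closed M S →
    ∀ X ∈ S, P.Inst M X →
      ∃ Xh : Set M.carrier, IsPhi θ M (numM M e) X Xh ∧ Q.Inst M Xh ∧
        ∀ Yh ∈ S, Q.Sol M Xh Yh →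
          ∃ Ys : Set M.carrier, IsPhi θ M (numM M i) (joinM M X Yh) Ys ∧ P.Sol M X Ys

/-! ### Runs played according to an arithmetic formula `Λ(X,n,e)` -/

/-- The run `(f,g)` is played by Player 2 according to `Λ`: at each alive stage `n`, Player 2
plays (the coded move of) `Φ_e^{X₀⊕⋯⊕Xₙ}` for some `e ∈ M` with
`M[X₀,…,Xₙ] ⊨ Λ(X₀⊕⋯⊕Xₙ, n, e)`. -/
def AccordsLambda (θ Λ : Formula) (P Q : Pi12Problem) (M : L1Struc)
    (C : List (Set M.carrier) → Prop) (f : ℕ → Set M.carrier)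
    (g : ℕ → Prop × Set M.carrier) : Prop :=
  ∀ n, Alive P Q M C f g n → ∃ (e : M.carrier) (Z : Set M.carrier),
    Λ.Sat M Set.univ (fun m => if m = 0 then numM M n else if m = 1 then e else M.zero)
      (fun _ => joinList M (histL M f n)) ∧
    IsPhi θ M e (joinList M (histL M f n)) Z ∧
    g n = ((M.zero ∈ Z), { a | M.add a M.one ∈ Z })

/-! ### Semantic rendering of the formulas `Θₙ` and `Δₙ` -/

/-- Satisfaction of the matrix `Θₙ`, given `X₀`, the current join `J`, the pairs
`(e_j, Y_j)` and the remaining `X_{j+1}, …`. -/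
def ThetaSat (θ : Formula) (P Q : Pi12Problem) (M : L1Struc) (X0 : Set M.carrier) :
    Set M.carrier → List (M.carrier × Set M.carrier) → List (Set M.carrier) → Prop
  | _, [], _ => True
  | J, [(e, Y)], _ => IsPhi θ M e J Y ∧ P.Sol M X0 Y
  | _, _ :: _ :: _, [] => True
  | J, (e, Y) :: eY' :: eYs, X :: Xs =>
      IsPhi θ M e J Y ∧ (P.Sol M X0 Y ∨ (Q.Inst M Y ∧ (Q.Sol M Y X →
        ThetaSat θ P Q M X0 (joinM M J X) (eY' :: eYs) Xs)))

def DeltaSatFin (θ : Formula) (P Q : Pi12Problem) (M : L1Struc)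
    (Xs : List (Set M.carrier)) (eYs : List (M.carrier × Set M.carrier)) : Prop :=
  match Xs with
  | [] => True
  | X0 :: rest => P.Inst M X0 → ThetaSat θ P Q M X0 X0 eYs rest

def DeltaSatAux (θ : Formula) (P Q : Pi12Problem) (M : L1Struc) (S : Set (Set M.carrier)) :
    ℕ → List (Set M.carrier) → List (M.carrier × Set M.carrier) → Prop
  | 0, Xs, eYs => DeltaSatFin θ P Q M Xs eYs
  | k+1, Xs, eYs => ∀ X ∈ S, ∃ e : M.carrier, ∃ Y ∈ S,
      DeltaSatAux θ P Q M S k (Xs ++ [X]) (eYs ++ [(e, Y)])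

/-- `(M,S) ⊨ Δₙ`, i.e. `∀X₀ ∃e₀,Y₀ ⋯ ∀Xₙ ∃eₙ,Yₙ Θₙ(…)`. -/
def DeltaSat (θ : Formula) (P Q : Pi12Problem) (M : L1Struc) (S : Set (Set M.carrier))
    (n : ℕ) : Prop :=
  DeltaSatAux θ P Q M S (n+1) [] []

/-! ### Concrete Π¹₂-problems -/

/-- The pairing term `π(t,s) = (t+s)·(t+s) + t`. -/
def pairT (t s : Term) : Term := .add (.mul (.add t s) (.add t s)) t

def Term.ofNat : ℕ → Term
  | 0 => .zero
  | n+1 => .add (Term.ofNat n) .one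

def trueF : Formula := .eq .zero .zero

def leF (t s : Term) : Formula := .or (.lt t s) (.eq t s)

/-- "The set variable `s` names an infinite set" (using number variables `a`, `b`). -/
def infiniteF (s a b : ℕ) : Formula :=
  .allN a (.exN b (.and (.lt (.var a) (.var b)) (.mem (.var b) s)))

/-- `LH`: instances are `c : [ℕ]² → 2` with `lim_y c(x,y) = 1` for all `x`
(coded as the set of codes `π(x,y)`, `x<y`, of pairs colored `1`); solutions are
infinite homogeneous sets. -/
def LH : Pi12Problem where
  theta := .allN 0 (.exN 1 (.allN 2 (.imp (.and (.lt (.var 0) (.var 2)) (.lt (.var 1) (.var 2)))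
    (.mem (pairT (.var 0) (.var 2)) 0))))
  psi := .and (infiniteF 1 0 1)
    (.or
      (.allN 0 (.allN 1 (.imp
        (.and (.mem (.var 0) 1) (.and (.mem (.var 1) 1) (.lt (.var 0) (.var 1))))
        (.mem (pairT (.var 0) (.var 1)) 0))))
      (.allN 0 (.allN 1 (.imp
        (.and (.mem (.var 0) 1) (.and (.mem (.var 1) 1) (.lt (.var 0) (.var 1))))
        (.not (.mem (pairT (.var 0) (.var 1)) 0))))))

/-- `Bound*`: an instance is a simultaneous enumeration of a finite family `F₀,…,F_k` of
bounded sets (marker `π(0,k)`; entries `π(i+1, π(n,s))` meaning `n` enters `F_i` at stage `s`);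
a solution is (the singleton of) a common bound. -/
def BoundStar : Pi12Problem where
  theta := .exN 0 (.and (.mem (pairT .zero (.var 0)) 0)
    (.and (.allN 1 (.imp (.mem (pairT .zero (.var 1)) 0) (.eq (.var 1) (.var 0))))
      (.and (.allN 1 (.imp (.mem (.var 1) 0)
          (.or (.exN 2 (.eq (.var 1) (pairT .zero (.var 2))))
               (.exN 2 (.and (leF (.var 2) (.var 0))
                 (.exN 3 (.exN 4 (.eq (.var 1)
                   (pairT (.add (.var 2) .one) (pairT (.var 3) (.var 4)))))))))))
        (.allN 1 (.imp (leF (.var 1) (.var 0))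
          (.exN 2 (.allN 3 (.allN 4 (.imp
            (.mem (pairT (.add (.var 1) .one) (pairT (.var 3) (.var 4))) 0)
            (leF (.var 3) (.var 2)))))))))))
  psi := .exN 0 (.and (.mem (.var 0) 1)
    (.and (.allN 1 (.imp (.mem (.var 1) 1) (.eq (.var 1) (.var 0))))
      (.allN 1 (.allN 2 (.allN 3 (.imp
        (.mem (pairT (.add (.var 1) .one) (pairT (.var 2) (.var 3))) 0)
        (leF (.var 2) (.var 0))))))))

/-- `stBound*`: an instance is an enumeration of a set `X ⊆ ℕ×ℕ` (entries `π(π(n,k),s)`)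
such that `{n : ∃k (n,k) ∈ X}` is bounded and each `{k : (n,k) ∈ X}` is bounded; a solution
is (the singleton of) a bound on `{k : ∃n (n,k) ∈ X}`. -/
def stBoundStar : Pi12Problem where
  theta := .and (.allN 0 (.imp (.mem (.var 0) 0)
        (.exN 1 (.exN 2 (.exN 3 (.eq (.var 0) (pairT (pairT (.var 1) (.var 2)) (.var 3))))))))
    (.and (.exN 0 (.allN 1 (.allN 2 (.allN 3 (.imp
        (.mem (pairT (pairT (.var 1) (.var 2)) (.var 3)) 0) (leF (.var 1) (.var 0)))))))
      (.allN 1 (.exN 0 (.allN 2 (.allN 3 (.imp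
        (.mem (pairT (pairT (.var 1) (.var 2)) (.var 3)) 0) (leF (.var 2) (.var 0))))))))
  psi := .exN 0 (.and (.mem (.var 0) 1)
    (.and (.allN 1 (.imp (.mem (.var 1) 1) (.eq (.var 1) (.var 0))))
      (.allN 1 (.allN 2 (.allN 3 (.imp
        (.mem (pairT (pairT (.var 1) (.var 2)) (.var 3)) 0)
        (leF (.var 2) (.var 0))))))))

/-- `stRT¹_{<∞}`: instances are functions `c : ℕ → ℕ` with bounded range (coded as sets of
codes `π(x, c(x))`); solutions are infinite sets on which `c` is constant. -/
def stRT1inf : Pi12Problem where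
  theta := .and (.allN 0 (.exN 1 (.and (.mem (pairT (.var 0) (.var 1)) 0)
        (.allN 2 (.imp (.mem (pairT (.var 0) (.var 2)) 0) (.eq (.var 2) (.var 1)))))))
    (.exN 1 (.allN 0 (.allN 2 (.imp (.mem (pairT (.var 0) (.var 2)) 0) (leF (.var 2) (.var 1))))))
  psi := .and (infiniteF 1 0 1)
    (.exN 0 (.allN 1 (.imp (.mem (.var 1) 1) (.mem (pairT (.var 1) (.var 0)) 0))))

/-- `C_ℕ`: an instance is an enumeration of the complement of a nonempty set `A`
(entries `π(n,s)` meaning `n` is enumerated out at stage `s`); a solution is (the singleton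
of) an element of `A`. -/
def CN : Pi12Problem where
  theta := .exN 0 (.allN 1 (.not (.mem (pairT (.var 0) (.var 1)) 0)))
  psi := .exN 0 (.and (.mem (.var 0) 1)
    (.and (.allN 1 (.imp (.mem (.var 1) 1) (.eq (.var 1) (.var 0))))
      (.allN 1 (.not (.mem (pairT (.var 0) (.var 1)) 0)))))

/-- The code `π(x_i, π(x_{i+1}, …, x_{i+c-1}))` of the tuple of variables `i, …, i+c-1`. -/
def varsCode : ℕ → ℕ → Term
  | _, 0 => .zero
  | i, 1 => .var i
  | i, c+2 => pairT (.var i) (varsCode (i+1) (c+1))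

/-- `x_i < x_{i+1} < ⋯ < x_{i+c-1}`. -/
def chainLt : ℕ → ℕ → Formula
  | _, 0 => trueF
  | _, 1 => trueF
  | i, c+2 => .and (.lt (.var i) (.var (i+1))) (chainLt (i+1) (c+1))

/-- `x_i ∈ s ∧ ⋯ ∧ x_{i+c-1} ∈ s` (for the set variable `s`). -/
def allMemS (s : ℕ) : ℕ → ℕ → Formula
  | _, 0 => trueF
  | i, c+1 => .and (.mem (.var i) s) (allMemS s (i+1) c)

/-- `∀ x_i ⋯ ∀ x_{i+c-1} φ`. -/
def allNs : ℕ → ℕ → Formula → Formula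
  | _, 0, φ => φ
  | i, c+1, φ => .allN i (allNs (i+1) c φ)

/-- `RTⁿ_k`: instances are colorings `c : [ℕ]ⁿ → k` (coded as sets of codes
`π(⟨x₁,…,xₙ⟩, v)` for `x₁<⋯<xₙ` and `v = c(x₁,…,xₙ) < k`); solutions are infinite
homogeneous sets. -/
def RTn (n k : ℕ) : Pi12Problem where
  theta := allNs 1 n (.imp (chainLt 1 n)
    (.exN 0 (.and (.lt (.var 0) (Term.ofNat k))
      (.and (.mem (pairT (varsCode 1 n) (.var 0)) 0)
        (.allN (n+1) (.imp (.mem (pairT (varsCode 1 n) (.var (n+1))) 0)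
          (.eq (.var (n+1)) (.var 0))))))))
  psi := .and (infiniteF 1 (n+1) (n+2))
    (.exN 0 (.and (.lt (.var 0) (Term.ofNat k))
      (allNs 1 n (.imp (.and (chainLt 1 n) (allMemS 1 1 n))
        (.mem (pairT (varsCode 1 n) (.var 0)) 0)))))

/-- `RTⁿ_{<∞}`: the number of colors is part of the instance (marker `π(0,k)`, entries
`π(1, π(⟨x₁,…,xₙ⟩, v))`). -/
def RTnInf (n : ℕ) : Pi12Problem where
  theta := .exN 0 (.and (.mem (pairT .zero (.var 0)) 0)
    (.and (.allN (n+1) (.imp (.mem (pairT .zero (.var (n+1))) 0) (.eq (.var (n+1)) (.var 0))))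
      (allNs 1 n (.imp (chainLt 1 n)
        (.exN (n+1) (.and (.lt (.var (n+1)) (.var 0))
          (.and (.mem (pairT .one (pairT (varsCode 1 n) (.var (n+1)))) 0)
            (.allN (n+2) (.imp (.mem (pairT .one (pairT (varsCode 1 n) (.var (n+2)))) 0)
              (.eq (.var (n+2)) (.var (n+1))))))))))))
  psi := .and (infiniteF 1 (n+1) (n+2))
    (.exN (n+1) (allNs 1 n (.imp (.and (chainLt 1 n) (allMemS 1 1 n))
      (.mem (pairT .one (pairT (varsCode 1 n) (.var (n+1)))) 0))))

/-! ### Material for Uftring's example (Statement 11) -/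

/-- `G` is (an arithmetization of) a primitive recursive predicate: a Σ⁰₁ formula in the
number variable `0`, `RCA₀`-provably equivalent to a Π⁰₁ formula, whose standard
extension is primitive recursive. -/
def PrimRecPred (G : Formula) : Prop :=
  IsSigma01 G ∧ G.numFV ⊆ {0} ∧ G.setFV = ∅ ∧
  (∃ π : Formula, IsPi01 π ∧ π.numFV ⊆ {0} ∧ π.setFV = ∅ ∧
      Proves RCA0 (Formula.iff G π)) ∧
  (∃ f : ℕ → Bool, Nat.Primrec (fun m => (f m).toNat) ∧
      ∀ m : ℕ, f m = true ↔
        G.Sat stdM Set.univ (fun i => if i = 0 then m else 0) (fun _ => (∅ : Set ℕ)))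

/-- Truth of `G(m)` in the standard model. -/
def satStd1 (G : Formula) (m : ℕ) : Prop :=
  G.Sat stdM Set.univ (fun i => if i = 0 then m else 0) (fun _ => (∅ : Set ℕ))

/-- The problem `P ≡ ∀X ∃Y ∀x G(x)`. -/
def PGprob (G : Formula) : Pi12Problem where
  theta := trueF
  psi := .allN 0 G

/-- The problem `Q ≡ ∀X [X ≠ ∅ → ∃Y G(μX)]`. -/
def QGprob (G : Formula) : Pi12Problem where
  theta := .exN 0 (.mem (.var 0) 0)
  psi := .exN 0 (.and (.mem (.var 0) 0)
    (.and (.allN 1 (.imp (.lt (.var 1) (.var 0)) (.not (.mem (.var 1) 0)))) G))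

/-! ### Material for Statement 13 -/

/-- A model of a sentence (all valuations into `S`). -/
def ModelsSent (M : L1Struc) (S : Set (Set M.carrier)) (φ : Formula) : Prop :=
  ∀ (v : ℕ → M.carrier) (V : ℕ → Set M.carrier), (∀ i, V i ∈ S) → φ.Sat M S v V

/-- The pairing function inside `M`. -/
def pairM (M : L1Struc) (x y : M.carrier) : M.carrier :=
  M.add (M.mul (M.add x y) (M.add x y)) x

/-- `j : ℕ → M` is an embedding of the standard model into `M`. -/
def L1Embed (M : L1Struc) (j : ℕ → M.carrier) : Prop :=
  j 0 = M.zero ∧ j 1 = M.one ∧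
  (∀ a b : ℕ, j (a + b) = M.add (j a) (j b)) ∧
  (∀ a b : ℕ, j (a * b) = M.mul (j a) (j b)) ∧
  (∀ a b : ℕ, a < b ↔ M.lt (j a) (j b)) ∧
  Function.Injective j

/-- `M` and the embedded standard model satisfy the same existential `L₁`-sentences with
parameters from `ℕ`. -/
def OneElementaryOverStd (M : L1Struc) (j : ℕ → M.carrier) : Prop :=
  ∀ φ, IsExistentialL1 φ → ∀ v : ℕ → ℕ,
    (φ.Sat stdM Set.univ v (fun _ => (∅ : Set ℕ)) ↔
     φ.Sat M Set.univ (fun i => j (v i)) (fun _ => (∅ : Set M.carrier)))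

/-- `A` is `M`-finite: Δ⁰₁-definable over `M` (without set parameters) and bounded. -/
def MFinite (M : L1Struc) (A : Set M.carrier) : Prop :=
  A ∈ Mcl M (∅ : Set (Set M.carrier)) ∧ ∃ b, ∀ x ∈ A, M.lt x b

/-- A total coloring (coded as the set `X` of codes of pairs colored `1`) extends the
condition `(m, p)` of the forcing notion `P_M`: it agrees with `p` below `m`, and colors
`(x,y)` with `1` whenever `x < m ≤ y`. -/
def ExtendsCond (M : L1Struc) (m : M.carrier) (p : Set M.carrier) (X : Set M.carrier) : Prop :=
  (∀ x y, M.lt x y → M.lt y m → (pairM M x y ∈ X ↔ pairM M x y ∈ p)) ∧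
  (∀ x y, M.lt x m → ¬ M.lt y m → M.lt x y → pairM M x y ∈ X)

end SOA

/-!
If the board `M[X₀,…,X_k]` reached at stage `k` of a run of `G^Γ` is consistent with `Γ`, as
witnessed by a model `(M,T)` of `Γ`, then `T` is closed under Δ⁰₁-comprehension and contains every
move of Player 1 so far. Up to stage `k` the run is therefore a legal run of `Ĝ^Γ` over `(M,T)`,
still played according to `Λ` (whose reading does not depend on the second-order part), and the
hypothesis on `Ĝ^Γ` settles Player 2's obligations at stage `k`.
-/

namespace SOA

theorem IsDelta0.isArithmetic {φ : Formula} (h : IsDelta0 φ) : φ.IsArithmetic := by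
  induction h <;> simp_all [Formula.IsArithmetic]

theorem IsSigma01.isArithmetic {φ : Formula} (h : IsSigma01 φ) : φ.IsArithmetic := by
  induction h with
  | delta0 h => exact h.isArithmetic
  | exN _ _ ih => exact ih

theorem Formula.IsArithmetic.sat_congr {M : L1Struc} {D D' : Set (Set M.carrier)} :
    ∀ {φ : Formula}, φ.IsArithmetic → ∀ {v : ℕ → M.carrier} {V V' : ℕ → Set M.carrier},
      (∀ i ∈ φ.setFV, V i = V' i) → (φ.Sat M D v V ↔ φ.Sat M D' v V')
  | .eq _ _, _, _, _, _, _ => Iff.rfl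
  | .lt _ _, _, _, _, _, _ => Iff.rfl
  | .mem _ X, _, _, _, _, hV => by simp only [Formula.Sat, hV X rfl]
  | .not φ, hφ, _, _, _, hV => not_congr (sat_congr (φ := φ) hφ hV)
  | .and φ ψ, hφ, _, _, _, hV => and_congr (sat_congr (φ := φ) hφ.1 fun i hi => hV i (.inl hi))
      (sat_congr (φ := ψ) hφ.2 fun i hi => hV i (.inr hi))
  | .or φ ψ, hφ, _, _, _, hV => or_congr (sat_congr (φ := φ) hφ.1 fun i hi => hV i (.inl hi))
      (sat_congr (φ := ψ) hφ.2 fun i hi => hV i (.inr hi))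
  | .imp φ ψ, hφ, _, _, _, hV => imp_congr (sat_congr (φ := φ) hφ.1 fun i hi => hV i (.inl hi))
      (sat_congr (φ := ψ) hφ.2 fun i hi => hV i (.inr hi))
  | .allN _ φ, hφ, _, _, _, hV => forall_congr' fun _ => sat_congr (φ := φ) hφ hV
  | .exN _ φ, hφ, _, _, _, hV => exists_congr fun _ => sat_congr (φ := φ) hφ hV

theorem Formula.setFV_finite : ∀ φ : Formula, φ.setFV.Finite
  | .eq _ _ | .lt _ _ => Set.finite_empty
  | .mem _ X => Set.finite_singleton X
  | .not φ | .allN _ φ | .exN _ φ => φ.setFV_finite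
  | .and φ ψ | .or φ ψ | .imp φ ψ => φ.setFV_finite.union ψ.setFV_finite
  | .allS _ φ | .exS _ φ => φ.setFV_finite.sdiff

theorem subset_Mcl {M : L1Struc} (Ps : Set (Set M.carrier)) : Ps ⊆ Mcl M Ps := by
  intro X hX
  refine ⟨.mem (.var 0) 0, .not (.mem (.var 0) 0), 0, fun _ => M.zero, fun _ => X,
    .delta0 (.mem _ _), .delta0 (.not (.mem _ _)), fun _ _ => hX, ?_, ?_⟩
  · intro a
    simp [Formula.Sat, Term.val]
  · ext a
    simp [Formula.Sat, Term.val]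

theorem Mcl_mono {M : L1Struc} {Ps Ps' : Set (Set M.carrier)} (h : Ps ⊆ Ps') :
    Mcl M Ps ⊆ Mcl M Ps' := by
  rintro X ⟨φ₀, φ₁, x, v, V, h₀, h₁, hV, hiff, rfl⟩
  exact ⟨φ₀, φ₁, x, v, V, h₀, h₁, fun i hi => h (hV i hi), hiff, rfl⟩

/-- The instance of Δ⁰₁-comprehension is taken with a fresh set variable, and the set parameters
that are not free are reassigned to members of `T` (whence `T.Nonempty`), since `Models2` only
speaks about valuations into `T`. -/
theorem d01Closed_of_models {M : L1Struc} {T : Set (Set M.carrier)}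
    (hT : Models2 M T Delta01CA) (hne : T.Nonempty) : D01Closed M T := by
  classical
  rintro _ ⟨φ₀, φ₁, x, v, V, h₀, h₁, hV, hiff, rfl⟩
  obtain ⟨B, hB⟩ := hne
  obtain ⟨Z, hZ⟩ := (φ₀.setFV_finite.union φ₁.setFV_finite).infinite_compl.nonempty
  have hZ₀ : Z ∉ φ₀.setFV := fun h => hZ (.inl h)
  have hZ₁ : Z ∉ φ₁.setFV := fun h => hZ (.inr h)
  let W : ℕ → Set M.carrier := fun i => if i ∈ φ₀.setFV ∪ φ₁.setFV then V i else B
  have hW : ∀ i, W i ∈ T := fun i => by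
    by_cases h : i ∈ φ₀.setFV ∪ φ₁.setFV <;> simp only [W, h, if_true, if_false]
    exacts [hV i h, hB]
  have hsat₀ : ∀ {w} {A : Set M.carrier},
      φ₀.Sat M T w (Function.update W Z A) ↔ φ₀.Sat M Set.univ w V :=
    h₀.isArithmetic.sat_congr fun i hi => by
      simp [W, Function.update_of_ne (ne_of_mem_of_not_mem hi hZ₀), Or.inl hi]
  have hsat₀W : ∀ {w}, φ₀.Sat M T w W ↔ φ₀.Sat M Set.univ w V := fun {w} => by
    simpa only [Function.update_eq_self] using hsat₀ (w := w) (A := W Z)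
  have hsat₁ : ∀ {w}, φ₁.Sat M T w W ↔ φ₁.Sat M Set.univ w V :=
    h₁.isArithmetic.sat_congr fun i hi => by simp [W, Or.inr hi]
  have hdelta : (Formula.allN x (φ₀.iff φ₁.not)).Sat M T v W := fun a =>
    ⟨fun h h' => (hiff a).1 (hsat₀W.1 h) (hsat₁.1 h'),
      fun h => hsat₀W.2 ((hiff a).2 fun h' => h (hsat₁.2 h'))⟩
  obtain ⟨A, hAT, hA⟩ := hT _ ⟨φ₀, φ₁, x, Z, h₀, h₁, hZ₀, hZ₁, rfl⟩ v W hW hdelta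
  convert hAT using 1
  ext a
  obtain ⟨hAφ, hφA⟩ := hA a
  simp only [Formula.Sat, Term.val, Function.update_self] at hAφ hφA
  exact ⟨fun h => hφA (hsat₀.2 h), fun h => hsat₀.1 (hAφ h)⟩

section Runs

variable {P Q : Pi12Problem} {M : L1Struc} {C C' : List (Set M.carrier) → Prop}
  {f : ℕ → Set M.carrier} {g : ℕ → Prop × Set M.carrier}

theorem mem_histL_of_le {X : Set M.carrier} {j k : ℕ} (hjk : j ≤ k) (hX : X ∈ histL M f j) :
    X ∈ histL M f k := by
  simp only [histL, List.mem_map, List.mem_range] at hX ⊢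
  obtain ⟨i, hi, rfl⟩ := hX
  exact ⟨i, by omega, rfl⟩

theorem Alive.cond : ∀ {k}, Alive P Q M C f g k → C (histL M f k)
  | 0, h => h.2
  | _ + 1, h => h.2.2.2.2.2

theorem Alive.of_le : ∀ {k j : ℕ}, j ≤ k → Alive P Q M C f g k → Alive P Q M C f g j
  | 0, _, hj, h => by rwa [Nat.le_zero.mp hj]
  | k + 1, j, hj, h => by
    rcases Nat.lt_or_eq_of_le hj with hj | rfl
    · exact Alive.of_le (Nat.le_of_lt_succ hj) h.1
    · exact h

theorem Alive.of_cond : ∀ {k}, (∀ j ≤ k, C' (histL M f j)) →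
    Alive P Q M C f g k → Alive P Q M C' f g k
  | 0, hC, h => ⟨h.1, hC 0 le_rfl⟩
  | k + 1, hC, h => ⟨h.1.of_cond fun j hj => hC j (Nat.le_succ_of_le hj),
      h.2.1, h.2.2.1, h.2.2.2.1, h.2.2.2.2.1, hC (k + 1) le_rfl⟩

theorem Alive.mono {k : ℕ} (hC : ∀ hist, C hist → C' hist) (h : Alive P Q M C f g k) :
    Alive P Q M C' f g k :=
  h.of_cond fun _ hj => hC _ (h.of_le hj).cond

theorem AccordsLambda.mono {θ Λ : Formula} (hC : ∀ hist, C' hist → C hist)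
    (h : AccordsLambda θ Λ P Q M C f g) : AccordsLambda θ Λ P Q M C' f g :=
  fun m hm => h m (hm.mono hC)

theorem P2WinsRunWithin.of_forall_alive {n : ℕ}
    (h : ∀ k, Alive P Q M C f g k →
      ∃ C' : List (Set M.carrier) → Prop, P2WinsRunWithin P Q M C' f g n ∧ Alive P Q M C' f g k) :
    P2WinsRunWithin P Q M C f g n :=
  ⟨fun k hk => by
      obtain ⟨_, hwin, hk'⟩ := h k hk
      exact hwin.1 k hk',
    fun hn => by
      obtain ⟨_, hwin, hn'⟩ := h n hn
      exact hwin.2 hn'⟩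

end Runs

theorem condG_of_condS {Γ : Set Formula} {M : L1Struc} {T : Set (Set M.carrier)}
    (hT : Models2 M T Γ) (hcl : D01Closed M T) {hist : List (Set M.carrier)}
    (h : CondS M T hist) : CondG Γ M hist :=
  ⟨T, fun X hX => hcl X (Mcl_mono h hX), hT⟩

theorem statement8_general (Γ : Set Formula) (hExt : Delta01CA ⊆ Γ)
    (θ : Formula)
    (P Q : Pi12Problem)
    (Λ : Formula)
    (n : ℕ)
    (hwin : ∀ (M : L1Struc) (S : Set (Set M.carrier)), Countable M.carrier →
      Models2 M S Γ → D01Closed M S → ∀ f g,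
        AccordsLambda θ Λ P Q M (CondS M S) f g → P2WinsRunWithin P Q M (CondS M S) f g n) :
    ∀ M : L1Struc, Countable M.carrier → ∀ f g,
      AccordsLambda θ Λ P Q M (CondG Γ M) f g →
        P2WinsRunWithin P Q M (CondG Γ M) f g n := by
  intro M hM f g hacc
  refine P2WinsRunWithin.of_forall_alive fun k hk => ?_
  obtain ⟨T, hboard, hT⟩ := hk.cond
  have hhist : ∀ j ≤ k, CondS M T (histL M f j) := fun j hj X hX =>
    hboard (subset_Mcl _ (mem_histL_of_le hj hX))
  have hcl : D01Closed M T :=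
    d01Closed_of_models (fun φ hφ => hT φ (hExt hφ)) ⟨f 0, hhist 0 k.zero_le _ (by simp [histL])⟩
  exact ⟨CondS M T, hwin M T hM hT hcl f g (hacc.mono fun _ => condG_of_condS hT hcl),
    hk.of_cond hhist⟩

/-- Let `Γ` be a consistent extension of Δ⁰₁-comprehension that proves the existence of a
universal Σ⁰₁ formula `θ`. Let `P`, `Q` be Π¹₂-problems and `Λ(X,n,e)` an arithmetic
formula such that Player 2 wins any run of `Ĝ^Γ(Q → P)` that it plays according to `Λ` in
at most `n` many moves. Then Player 2 wins any run of `G^Γ(Q → P)` that it plays according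
to `Λ` in at most `n` many moves. -/
theorem statement8 (Γ : Set Formula) (hCons : SemConsistent Γ) (hExt : Delta01CA ⊆ Γ)
    (θ : Formula) (hθ : UnivSigma01 Γ θ)
    (P Q : Pi12Problem) (hP : P.WellFormed) (hQ : Q.WellFormed)
    (Λ : Formula) (hΛ : Λ.IsArithmetic) (hΛN : Λ.numFV ⊆ {0, 1}) (hΛS : Λ.setFV ⊆ {0})
    (n : ℕ)
    (hwin : ∀ (M : L1Struc) (S : Set (Set M.carrier)), Countable M.carrier →
      Models2 M S Γ → D01Closed M S → ∀ f g,
        AccordsLambda θ Λ P Q M (CondS M S) f g → P2WinsRunWithin P Q M (CondS M S) f g n) :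
    ∀ M : L1Struc, Countable M.carrier → ∀ f g,
      AccordsLambda θ Λ P Q M (CondG Γ M) f g →
        P2WinsRunWithin P Q M (CondG Γ M) f g n :=
  statement8_general Γ hExt θ P Q Λ n hwin

end SOA
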